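/- arXiv:1409.1423 — 3 statements merged into one kernel-verified Lean document; each statement's English description precedes it below -/
import Mathlib

section
/- The set of finite Blaschke products on the unit disc is closed under composition: if f and g are finite Blaschke products, then so is f ∘ g. -/
open Complex Metric MeasureTheory Set Filter

noncomputable def blaschkeFactor (a z : ℂ) : ℂ := (z - a) / (1 - (starRingEnd ℂ) a * z)

def IsFiniteBlaschkeDeg (n : ℕ) (f : ℂ → ℂ) : Prop :=
  ∃ (lam : ℂ) (a : Fin n → ℂ), ‖lam‖ = 1 ∧ (∀ i, a i ∈ ball (0:ℂ) 1) ∧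
    ∀ z ∈ ball (0:ℂ) 1, f z = lam * ∏ i, blaschkeFactor (a i) z

def IsFiniteBlaschke (f : ℂ → ℂ) : Prop := ∃ n : ℕ, 0 < n ∧ IsFiniteBlaschkeDeg n f

/-!
Finite Blaschke products of positive degree map the disc into itself, and they are closed under
products and unimodular constant factors, so it suffices to show that `φ_a ∘ g` is a Blaschke
product of the same degree as `g` for every factor `φ_a` of `f`. On the disc `g = μ A / A⋆`, where
`A = ∏ (X - b_i)` and `A⋆` is its reflection in the unit circle; hence `φ_a ∘ g = P / (μ P⋆)` with
`P = μ A - a A⋆`. The polynomial `P` has degree `deg g`, and its roots lie in the disc because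
`|A⋆| ≤ |A|` off the disc. Factoring `P` over `ℂ` then exhibits `P / P⋆` as a Blaschke product.
-/

open Polynomial ComplexConjugate

theorem sq_norm_one_sub_conj_mul_sub_sq_norm_sub (a z : ℂ) :
    ‖1 - conj a * z‖ ^ 2 - ‖z - a‖ ^ 2 = (1 - ‖a‖ ^ 2) * (1 - ‖z‖ ^ 2) := by
  simp only [Complex.sq_norm, normSq_apply, sub_re, sub_im, mul_re, mul_im, one_re, one_im,
    conj_re, conj_im]
  ring

theorem one_sub_conj_mul_ne_zero {a z : ℂ} (ha : ‖a‖ < 1) (hz : ‖z‖ ≤ 1) :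
    1 - conj a * z ≠ 0 := by
  rw [sub_ne_zero, ne_comm]
  refine ne_of_apply_ne norm (ne_of_lt ?_)
  rw [norm_mul, norm_conj, norm_one]
  exact mul_lt_one_of_nonneg_of_lt_one_left (norm_nonneg a) ha hz

theorem norm_blaschkeFactor_lt_one {a z : ℂ} (ha : ‖a‖ < 1) (hz : ‖z‖ < 1) :
    ‖blaschkeFactor a z‖ < 1 := by
  rw [blaschkeFactor, norm_div, div_lt_one (norm_pos_iff.mpr (one_sub_conj_mul_ne_zero ha hz.le)),
    ← sq_lt_sq₀ (norm_nonneg _) (norm_nonneg _)]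
  have ha2 : ‖a‖ ^ 2 < 1 := pow_lt_one₀ (norm_nonneg a) ha two_ne_zero
  have hz2 : ‖z‖ ^ 2 < 1 := pow_lt_one₀ (norm_nonneg z) hz two_ne_zero
  linarith [sq_norm_one_sub_conj_mul_sub_sq_norm_sub a z, mul_pos (sub_pos.2 ha2) (sub_pos.2 hz2)]

theorem norm_one_sub_conj_mul_le_norm_sub {b c : ℂ} (hb : ‖b‖ < 1) (hc : 1 ≤ ‖c‖) :
    ‖1 - conj b * c‖ ≤ ‖c - b‖ := by
  rw [← sq_le_sq₀ (norm_nonneg _) (norm_nonneg _)]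
  have hb2 : ‖b‖ ^ 2 < 1 := pow_lt_one₀ (norm_nonneg b) hb two_ne_zero
  have hc2 : 1 ≤ ‖c‖ ^ 2 := one_le_pow₀ hc
  linarith [sq_norm_one_sub_conj_mul_sub_sq_norm_sub b c,
    mul_nonpos_of_nonneg_of_nonpos (sub_nonneg.2 hb2.le) (sub_nonpos.2 hc2)]

theorem norm_multiset_prod_map {ι : Type*} (s : Multiset ι) (f : ι → ℂ) :
    ‖(s.map f).prod‖ = (s.map fun i => ‖f i‖).prod := by
  simpa [Multiset.map_map] using map_multiset_prod (normHom (α := ℂ)) (s.map f)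

noncomputable def blaschkeProd (μ : ℂ) (s : Multiset ℂ) (z : ℂ) : ℂ :=
  μ * (s.map (blaschkeFactor · z)).prod

namespace IsFiniteBlaschkeDeg

variable {m n : ℕ} {f g : ℂ → ℂ}

theorem congr (hf : IsFiniteBlaschkeDeg n f) (hfg : EqOn f g (ball 0 1)) :
    IsFiniteBlaschkeDeg n g := by
  obtain ⟨lam, a, hlam, ha, hf⟩ := hf
  exact ⟨lam, a, hlam, ha, fun z hz => (hfg hz).symm.trans (hf z hz)⟩

theorem const_mul (hf : IsFiniteBlaschkeDeg n f) {c : ℂ} (hc : ‖c‖ = 1) :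
    IsFiniteBlaschkeDeg n (fun z => c * f z) := by
  obtain ⟨lam, a, hlam, ha, hf⟩ := hf
  refine ⟨c * lam, a, by rw [norm_mul, hc, hlam, one_mul], ha, fun z hz => ?_⟩
  dsimp only
  rw [hf z hz, mul_assoc]

theorem mul (hf : IsFiniteBlaschkeDeg n f) (hg : IsFiniteBlaschkeDeg m g) :
    IsFiniteBlaschkeDeg (n + m) (fun z => f z * g z) := by
  obtain ⟨lf, a, hlf, ha, hf⟩ := hf
  obtain ⟨lg, b, hlg, hb, hg⟩ := hg
  refine ⟨lf * lg, Fin.append a b, by rw [norm_mul, hlf, hlg, one_mul],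
    Fin.addCases (by simpa using ha) (by simpa using hb), fun z hz => ?_⟩
  dsimp only
  rw [hf z hz, hg z hz, Fin.prod_univ_add]
  simp only [Fin.append_left, Fin.append_right]
  ring

theorem one : IsFiniteBlaschkeDeg 0 (fun _ => 1) :=
  ⟨1, Fin.elim0, norm_one, fun i => i.elim0, fun _ _ => by simp⟩

theorem finset_prod {ι : Type*} (s : Finset ι) {d : ι → ℕ} {f : ι → ℂ → ℂ}
    (hf : ∀ i ∈ s, IsFiniteBlaschkeDeg (d i) (f i)) :
    IsFiniteBlaschkeDeg (∑ i ∈ s, d i) (fun z => ∏ i ∈ s, f i z) := by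
  classical
  induction s using Finset.induction_on with
  | empty => simpa using one
  | insert i s hi ih =>
    simp only [Finset.sum_insert hi, Finset.prod_insert hi]
    exact (hf i (s.mem_insert_self i)).mul (ih fun j hj => hf j (Finset.mem_insert_of_mem hj))

theorem norm_le_one (hf : IsFiniteBlaschkeDeg n f) {z : ℂ} (hz : z ∈ ball (0 : ℂ) 1) :
    ‖f z‖ ≤ 1 := by
  obtain ⟨lam, a, hlam, ha, hf⟩ := hf
  rw [hf z hz, norm_mul, hlam, one_mul, norm_prod]
  exact Finset.prod_le_one (fun _ _ => norm_nonneg _) fun i _ =>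
    (norm_blaschkeFactor_lt_one (mem_ball_zero_iff.mp (ha i)) (mem_ball_zero_iff.mp hz)).le

theorem mapsTo_ball (hf : IsFiniteBlaschkeDeg n f) (hn : 0 < n) :
    MapsTo f (ball 0 1) (ball 0 1) := by
  intro z hz
  obtain ⟨k, rfl⟩ := Nat.exists_eq_add_one_of_ne_zero hn.ne'
  obtain ⟨lam, a, hlam, ha, hf⟩ := hf
  have hφ : ∀ i, ‖blaschkeFactor (a i) z‖ < 1 := fun i =>
    norm_blaschkeFactor_lt_one (mem_ball_zero_iff.mp (ha i)) (mem_ball_zero_iff.mp hz)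
  rw [mem_ball_zero_iff, hf z hz, norm_mul, hlam, one_mul, norm_prod, Fin.prod_univ_succ]
  exact mul_lt_one_of_nonneg_of_lt_one_left (norm_nonneg _) (hφ 0)
    (Finset.prod_le_one (fun _ _ => norm_nonneg _) fun i _ => (hφ i.succ).le)

theorem exists_blaschkeProd (hf : IsFiniteBlaschkeDeg n f) :
    ∃ (μ : ℂ) (s : Multiset ℂ), ‖μ‖ = 1 ∧ Multiset.card s = n ∧ (∀ c ∈ s, c ∈ ball (0 : ℂ) 1) ∧
      EqOn f (blaschkeProd μ s) (ball 0 1) := by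
  obtain ⟨μ, a, hμ, ha, hf⟩ := hf
  refine ⟨μ, Finset.univ.val.map a, hμ, by simp, by simpa using ha, fun z hz => ?_⟩
  rw [hf z hz, blaschkeProd, Multiset.map_map, Finset.prod_map_val]
  rfl

end IsFiniteBlaschkeDeg

theorem isFiniteBlaschkeDeg_blaschkeFactor {a : ℂ} (ha : a ∈ ball (0 : ℂ) 1) :
    IsFiniteBlaschkeDeg 1 (blaschkeFactor a) :=
  ⟨1, fun _ => a, norm_one, fun _ => ha, fun _ _ => by simp⟩

theorem isFiniteBlaschkeDeg_blaschkeProd {μ : ℂ} (hμ : ‖μ‖ = 1) {s : Multiset ℂ}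
    (hs : ∀ c ∈ s, c ∈ ball (0 : ℂ) 1) :
    IsFiniteBlaschkeDeg (Multiset.card s) (blaschkeProd μ s) := by
  suffices IsFiniteBlaschkeDeg (Multiset.card s) fun z => (s.map (blaschkeFactor · z)).prod
    from this.const_mul hμ
  induction s using Multiset.induction_on with
  | empty => simpa using IsFiniteBlaschkeDeg.one
  | cons c s ih =>
    simp only [Multiset.map_cons, Multiset.prod_cons, Multiset.card_cons, add_comm _ 1]
    exact (isFiniteBlaschkeDeg_blaschkeFactor (hs c (s.mem_cons_self c))).mul
      (ih fun d hd => hs d (Multiset.mem_cons_of_mem hd))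

/-- For `p.natDegree ≤ N` this is the polynomial `z ↦ z ^ N * conj (p (conj z)⁻¹)`, the reflection
of `p` in the unit circle. -/
noncomputable def conjReflect (N : ℕ) (p : ℂ[X]) : ℂ[X] :=
  reflect N (p.map (starRingEnd ℂ))

theorem coeff_conjReflect (N : ℕ) (p : ℂ[X]) (i : ℕ) :
    (conjReflect N p).coeff i = conj (p.coeff (revAt N i)) := by
  simp [conjReflect, coeff_reflect, coeff_map]

@[simp]
theorem conjReflect_conjReflect (N : ℕ) (p : ℂ[X]) : conjReflect N (conjReflect N p) = p := by
  ext i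
  simp [coeff_conjReflect, revAt_invol]

theorem conjReflect_sub (N : ℕ) (p q : ℂ[X]) :
    conjReflect N (p - q) = conjReflect N p - conjReflect N q := by
  simp [conjReflect, Polynomial.map_sub, reflect_sub]

theorem conjReflect_C_mul (N : ℕ) (c : ℂ) (p : ℂ[X]) :
    conjReflect N (C c * p) = C (conj c) * conjReflect N p := by
  simp [conjReflect, Polynomial.map_mul, reflect_C_mul]

theorem conjReflect_mul {M N : ℕ} {p q : ℂ[X]} (hp : p.natDegree ≤ M) (hq : q.natDegree ≤ N) :
    conjReflect (M + N) (p * q) = conjReflect M p * conjReflect N q := by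
  simp only [conjReflect, Polynomial.map_mul]
  exact reflect_mul _ _ (by rwa [natDegree_map]) (by rwa [natDegree_map])

theorem conjReflect_X_sub_C (c : ℂ) : conjReflect 1 (X - C c) = 1 - C (conj c) * X := by
  simp [conjReflect, reflect_sub, reflect_C]

theorem conjReflect_multiset_prod_X_sub_C (s : Multiset ℂ) :
    conjReflect (Multiset.card s) (s.map fun c => X - C c).prod =
      (s.map fun c => 1 - C (conj c) * X).prod := by
  induction s using Multiset.induction_on with
  | empty => simp [conjReflect, reflect_one]
  | cons c s ih =>
    simp only [Multiset.map_cons, Multiset.prod_cons, Multiset.card_cons, add_comm _ 1]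
    rw [conjReflect_mul (natDegree_X_sub_C c).le (natDegree_multiset_prod_X_sub_C_eq_card s).le,
      conjReflect_X_sub_C, ih]

theorem isFiniteBlaschkeDeg_div_conjReflect {P : ℂ[X]} (hP : P ≠ 0)
    (hroots : ∀ c ∈ P.roots, c ∈ ball (0 : ℂ) 1) :
    IsFiniteBlaschkeDeg P.natDegree fun z => P.eval z / (conjReflect P.natDegree P).eval z := by
  have hcard : Multiset.card P.roots = P.natDegree := IsAlgClosed.card_roots_eq_natDegree
  have hfac := C_leadingCoeff_mul_prod_multiset_X_sub_C hcard
  have hrefl : conjReflect (Multiset.card P.roots) P =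
      C (conj P.leadingCoeff) * (P.roots.map fun c => 1 - C (conj c) * X).prod := by
    conv_lhs => arg 2; rw [← hfac]
    rw [conjReflect_C_mul, conjReflect_multiset_prod_X_sub_C]
  have hlam : ‖P.leadingCoeff / conj P.leadingCoeff‖ = 1 := by
    rw [norm_div, norm_conj, div_self (norm_ne_zero_iff.mpr (leadingCoeff_ne_zero.mpr hP))]
  refine hcard ▸ (isFiniteBlaschkeDeg_blaschkeProd hlam hroots).congr fun z _ => ?_
  conv_rhs => arg 1; rw [← hfac]
  simp only [hrefl, blaschkeProd, blaschkeFactor, Multiset.prod_map_div, eval_mul, eval_C,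
    eval_multiset_prod, Multiset.map_map, Function.comp_def, eval_sub, eval_X, eval_one,
    mul_div_mul_comm]

/-- On the disc `blaschkeProd μ s = μ A / A⋆` with `A = ∏_{c ∈ s} (X - c)` and
`A⋆ = conjReflect (card s) A = ∏_{c ∈ s} (1 - conj c X)`, so that
`blaschkeFactor a ∘ blaschkeProd μ s = P / (μ P⋆)` for this `P = μ A - a A⋆`. -/
noncomputable def blaschkeCompNumerator (μ a : ℂ) (s : Multiset ℂ) : ℂ[X] :=
  C μ * (s.map fun c => X - C c).prod - C a * (s.map fun c => 1 - C (conj c) * X).prod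

section Composition

variable {μ a : ℂ} {s : Multiset ℂ}

theorem conjReflect_blaschkeCompNumerator (μ a : ℂ) (s : Multiset ℂ) :
    conjReflect (Multiset.card s) (blaschkeCompNumerator μ a s) =
      C (conj μ) * (s.map fun c => 1 - C (conj c) * X).prod -
        C (conj a) * (s.map fun c => X - C c).prod := by
  have hA := conjReflect_multiset_prod_X_sub_C s
  have hB : conjReflect (Multiset.card s) (s.map fun c => 1 - C (conj c) * X).prod =
      (s.map fun c => X - C c).prod := by
    rw [← hA, conjReflect_conjReflect]
  rw [blaschkeCompNumerator, conjReflect_sub, conjReflect_C_mul, conjReflect_C_mul, hA, hB]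

theorem prod_one_sub_conj_mul_ne_zero (hs : ∀ c ∈ s, c ∈ ball (0 : ℂ) 1) {z : ℂ}
    (hz : z ∈ ball (0 : ℂ) 1) : (s.map fun c => 1 - conj c * z).prod ≠ 0 := by
  refine Multiset.prod_ne_zero fun h => ?_
  obtain ⟨c, hc, hc0⟩ := Multiset.mem_map.mp h
  exact one_sub_conj_mul_ne_zero (mem_ball_zero_iff.mp (hs c hc)) (mem_ball_zero_iff.mp hz).le hc0

theorem blaschkeProd_mul_prod_one_sub_conj_mul (hs : ∀ c ∈ s, c ∈ ball (0 : ℂ) 1) {z : ℂ}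
    (hz : z ∈ ball (0 : ℂ) 1) :
    blaschkeProd μ s z * (s.map fun c => 1 - conj c * z).prod =
      μ * (s.map fun c => z - c).prod := by
  simp only [blaschkeProd, blaschkeFactor, Multiset.prod_map_div]
  rw [mul_assoc, div_mul_cancel₀ _ (prod_one_sub_conj_mul_ne_zero hs hz)]

theorem eval_blaschkeCompNumerator (hs : ∀ c ∈ s, c ∈ ball (0 : ℂ) 1) {z : ℂ}
    (hz : z ∈ ball (0 : ℂ) 1) :
    (blaschkeCompNumerator μ a s).eval z =
      (blaschkeProd μ s z - a) * (s.map fun c => 1 - conj c * z).prod := by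
  simp only [blaschkeCompNumerator, eval_sub, eval_mul, eval_C, eval_multiset_prod,
    Multiset.map_map, Function.comp_def, eval_X, eval_one]
  linear_combination -blaschkeProd_mul_prod_one_sub_conj_mul (μ := μ) hs hz

theorem mul_eval_conjReflect_blaschkeCompNumerator (hμ : ‖μ‖ = 1) (hs : ∀ c ∈ s, c ∈ ball (0 : ℂ) 1)
    {z : ℂ} (hz : z ∈ ball (0 : ℂ) 1) :
    μ * (conjReflect (Multiset.card s) (blaschkeCompNumerator μ a s)).eval z =
      (1 - conj a * blaschkeProd μ s z) * (s.map fun c => 1 - conj c * z).prod := by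
  have hμμ : μ * conj μ = 1 := by rw [mul_conj', hμ, ofReal_one, one_pow]
  simp only [conjReflect_blaschkeCompNumerator, eval_sub, eval_mul, eval_C, eval_multiset_prod,
    Multiset.map_map, Function.comp_def, eval_X, eval_one]
  linear_combination (s.map fun c => 1 - conj c * z).prod * hμμ +
    conj a * blaschkeProd_mul_prod_one_sub_conj_mul (μ := μ) hs hz

theorem mem_ball_of_mem_roots_blaschkeCompNumerator (ha : ‖a‖ < 1) (hμ : ‖μ‖ = 1)
    (hs : ∀ c ∈ s, c ∈ ball (0 : ℂ) 1) {w : ℂ} (hw : w ∈ (blaschkeCompNumerator μ a s).roots) :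
    w ∈ ball (0 : ℂ) 1 := by
  rw [mem_ball_zero_iff]
  by_contra! hw1
  have hroot : μ * (s.map fun c => w - c).prod = a * (s.map fun c => 1 - conj c * w).prod := by
    have := isRoot_of_mem_roots hw
    simp only [IsRoot, blaschkeCompNumerator, eval_sub, eval_mul, eval_C, eval_multiset_prod,
      Multiset.map_map, Function.comp_def, eval_X, eval_one] at this
    exact sub_eq_zero.mp this
  have hA : 0 < ‖(s.map fun c => w - c).prod‖ := by
    refine norm_pos_iff.mpr (Multiset.prod_ne_zero fun h => ?_)
    obtain ⟨c, hc, hwc⟩ := Multiset.mem_map.mp h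
    have := mem_ball_zero_iff.mp (hs c hc)
    rw [sub_eq_zero.mp hwc] at hw1
    linarith
  have hBA : ‖(s.map fun c => 1 - conj c * w).prod‖ ≤ ‖(s.map fun c => w - c).prod‖ := by
    rw [norm_multiset_prod_map, norm_multiset_prod_map]
    exact Multiset.prod_map_le_prod_map₀ _ _ (fun _ _ => norm_nonneg _) fun c hc =>
      norm_one_sub_conj_mul_le_norm_sub (mem_ball_zero_iff.mp (hs c hc)) hw1
  have := congrArg norm hroot
  rw [norm_mul, norm_mul, hμ, one_mul] at this
  nlinarith [norm_nonneg a]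

theorem coeff_card_blaschkeCompNumerator_ne_zero (ha : ‖a‖ < 1) (hμ : ‖μ‖ = 1)
    (hs : ∀ c ∈ s, c ∈ ball (0 : ℂ) 1) :
    (blaschkeCompNumerator μ a s).coeff (Multiset.card s) ≠ 0 := by
  -- this coefficient is `conj (P⋆.eval 0)`, and `μ P⋆(0) = 1 - conj a * g 0` with
  -- `g = blaschkeProd μ s` bounded by `1`
  have hzero : (0 : ℂ) ∈ ball (0 : ℂ) 1 := mem_ball_self one_pos
  have hg0 := (isFiniteBlaschkeDeg_blaschkeProd hμ hs).norm_le_one hzero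
  have hrefl0 := mul_eval_conjReflect_blaschkeCompNumerator (a := a) hμ hs hzero
  simp only [mul_zero, sub_zero, Multiset.map_const', Multiset.prod_replicate, one_pow,
    mul_one] at hrefl0
  have hcoeff := coeff_conjReflect (Multiset.card s) (blaschkeCompNumerator μ a s) 0
  rw [revAt_zero, coeff_zero_eq_eval_zero] at hcoeff
  intro h
  rw [h, map_zero] at hcoeff
  rw [hcoeff, mul_zero] at hrefl0
  exact one_sub_conj_mul_ne_zero ha hg0 hrefl0.symm

theorem natDegree_blaschkeCompNumerator_le (μ a : ℂ) (s : Multiset ℂ) :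
    (blaschkeCompNumerator μ a s).natDegree ≤ Multiset.card s := by
  have hB : (s.map fun c => 1 - C (conj c) * X).prod.natDegree ≤ Multiset.card s := by
    rw [← conjReflect_multiset_prod_X_sub_C]
    refine natDegree_reflect_le.trans (max_le le_rfl ?_)
    rw [natDegree_map, natDegree_multiset_prod_X_sub_C_eq_card]
  refine (natDegree_sub_le _ _).trans (max_le ?_ ?_)
  · exact (natDegree_C_mul_le _ _).trans (natDegree_multiset_prod_X_sub_C_eq_card s).le
  · exact (natDegree_C_mul_le _ _).trans hB

end Composition

theorem IsFiniteBlaschkeDeg.blaschkeFactor_comp {m : ℕ} {g : ℂ → ℂ} (hg : IsFiniteBlaschkeDeg m g)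
    {a : ℂ} (ha : a ∈ ball (0 : ℂ) 1) : IsFiniteBlaschkeDeg m fun z => blaschkeFactor a (g z) := by
  obtain ⟨μ, s, hμ, rfl, hs, hgs⟩ := hg.exists_blaschkeProd
  rw [mem_ball_zero_iff] at ha
  have hcoeff := coeff_card_blaschkeCompNumerator_ne_zero ha hμ hs
  have hdeg :=
    natDegree_eq_of_le_of_coeff_ne_zero (natDegree_blaschkeCompNumerator_le μ a s) hcoeff
  have hP : blaschkeCompNumerator μ a s ≠ 0 := fun h => hcoeff (by rw [h, coeff_zero])
  have hquot := isFiniteBlaschkeDeg_div_conjReflect hP fun w hw =>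
    mem_ball_of_mem_roots_blaschkeCompNumerator ha hμ hs hw
  refine hdeg ▸ (hquot.const_mul (c := conj μ) (by rw [norm_conj, hμ])).congr fun z hz => ?_
  have hμμ : conj μ * μ = 1 := by rw [conj_mul', hμ, ofReal_one, one_pow]
  dsimp only
  rw [hgs hz, hdeg, blaschkeFactor, ← mul_div_mul_right (blaschkeProd μ s z - a) _
      (prod_one_sub_conj_mul_ne_zero hs hz), ← eval_blaschkeCompNumerator hs hz,
    ← mul_eval_conjReflect_blaschkeCompNumerator hμ hs hz]
  rw [mul_comm μ, ← div_div, div_eq_mul_inv _ μ, inv_eq_of_mul_eq_one_left hμμ, mul_comm]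

theorem stmt_2 (f g : ℂ → ℂ) (hf : IsFiniteBlaschke f) (hg : IsFiniteBlaschke g) :
    IsFiniteBlaschke (f ∘ g) := by
  obtain ⟨n, hn, lam, a, hlam, ha, hf⟩ := hf
  obtain ⟨m, hm, hg⟩ := hg
  have hcomp := (IsFiniteBlaschkeDeg.finset_prod Finset.univ fun i _ =>
    hg.blaschkeFactor_comp (ha i)).const_mul hlam
  simp only [Finset.sum_const, Finset.card_univ, Fintype.card_fin, smul_eq_mul] at hcomp
  exact ⟨n * m, Nat.mul_pos hn hm,
    hcomp.congr fun z hz => (hf (g z) (hg.mapsTo_ball hm hz)).symm⟩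
end

section
/- Let f_n : 𝔻 → ℂ be holomorphic functions converging locally uniformly to a nonconstant holomorphic f. Then for every w ∈ ℂ and every compact K ⊆ 𝔻 whose boundary avoids the solutions of f = w, the number of solutions of f_n(z) = w in K (with multiplicity) equals the number of solutions of f(z) = w in K for all sufficiently large n. -/
open Complex Metric MeasureTheory Set Filter

noncomputable def zeroOrder (f : ℂ → ℂ) (z₀ : ℂ) : ℕ :=
  sInf {n : ℕ | ∃ g : ℂ → ℂ, AnalyticAt ℂ g z₀ ∧ g z₀ ≠ 0 ∧
    ∀ᶠ z in nhds z₀, f z = (z - z₀) ^ n * g z}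

def HasValence (f : ℂ → ℂ) (U : Set ℂ) (w : ℂ) (n : ℕ) : Prop :=
  ∃ hS : {z ∈ U | f z = w}.Finite, ∑ z ∈ hS.toFinset, zeroOrder (fun x => f x - w) z = n

open scoped Real Topology

/-! By uniform convergence, `‖F n - f‖` eventually stays below `‖f - w‖` on `K` minus small
disjoint discs around the finitely many `w`-points of `f`, all interior to `K`. So `F n - w` has no
zeros off the discs, and on each disc Rouché's theorem gives `F n - w` as many zeros as `f - w`.
Rouché follows from the argument principle, since `log ((F n - w) / (f - w))` is a primitive of the
difference of the two logarithmic derivatives on the circle. -/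

theorem exists_pos_closedBall_subset_pairwiseDisjoint {α : Type*} [MetricSpace α] {K : Set α}
    (S : Finset α) (hS : ∀ z ∈ S, z ∈ interior K) :
    ∃ r > 0, (∀ z ∈ S, closedBall z r ⊆ K) ∧ (S : Set α).PairwiseDisjoint (closedBall · r) := by
  have hsub : ∀ z ∈ S, ∀ᶠ r in 𝓝 (0 : ℝ), closedBall z r ⊆ K := fun z hz =>
    eventually_closedBall_subset (mem_interior_iff_mem_nhds.1 (hS z hz))
  have hsep : ∀ z ∈ S, ∀ z' ∈ S, ∀ᶠ r in 𝓝 (0 : ℝ), z ≠ z' → r < dist z z' / 2 := by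
    intro z _ z' _
    rcases eq_or_ne z z' with rfl | hne
    · exact .of_forall fun _ h => (h rfl).elim
    · exact (eventually_lt_nhds (half_pos (dist_pos.2 hne))).mono fun _ hr _ => hr
  obtain ⟨r, ⟨hK, hd⟩, hr⟩ := ((((eventually_all_finset S).2 hsub).and
    ((eventually_all_finset S).2 fun z hz => (eventually_all_finset S).2 (hsep z hz))).filter_mono
    nhdsWithin_le_nhds |>.and (self_mem_nhdsWithin (s := Ioi 0))).exists
  exact ⟨r, hr, hK, fun z hz z' hz' hne =>
    closedBall_disjoint_closedBall (by linarith [hd z hz z' hz' hne])⟩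

theorem sphere_subset_diff_biUnion_ball {α : Type*} [PseudoMetricSpace α] {S K : Set α} {r : ℝ}
    {c : α} (hc : c ∈ S) (hK : closedBall c r ⊆ K) (hdisj : S.PairwiseDisjoint (closedBall · r)) :
    sphere c r ⊆ K \ ⋃ c' ∈ S, ball c' r := by
  intro z hz
  refine ⟨hK (sphere_subset_closedBall hz), ?_⟩
  simp only [mem_iUnion, not_exists]
  intro c' hc' hzc'
  rcases eq_or_ne c c' with rfl | hne
  · exact (mem_sphere.1 hz).not_lt hzc'
  · exact Set.disjoint_left.1 (hdisj hc hc' hne) (sphere_subset_closedBall hz)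
      (ball_subset_closedBall hzc')

theorem TendstoUniformlyOn.eventually_forall_dist_lt {ι α β : Type*} [TopologicalSpace α]
    [PseudoMetricSpace β] {l : Filter ι} {F : ι → α → β} {f : α → β} {s : Set α} {g : α → ℝ}
    (hF : TendstoUniformlyOn F f l s) (hs : IsCompact s) (hg : ContinuousOn g s)
    (hpos : ∀ z ∈ s, 0 < g z) : ∀ᶠ n in l, ∀ z ∈ s, dist (f z) (F n z) < g z := by
  obtain ⟨ε, hε, hle⟩ := hs.exists_forall_le' hg hpos
  filter_upwards [Metric.tendstoUniformlyOn_iff.1 hF ε hε] with n hn z hz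
  exact (hn z hz).trans_le (hle z hz)

theorem zeroOrder_eq_analyticOrderNatAt {f : ℂ → ℂ} {z₀ : ℂ} (hf : AnalyticAt ℂ f z₀) :
    zeroOrder f z₀ = analyticOrderNatAt f z₀ := by
  have hset : {n : ℕ | ∃ g : ℂ → ℂ, AnalyticAt ℂ g z₀ ∧ g z₀ ≠ 0 ∧
      ∀ᶠ z in 𝓝 z₀, f z = (z - z₀) ^ n * g z} = {n : ℕ | analyticOrderAt f z₀ = n} := by
    ext n
    simp only [mem_ofPred_eq, hf.analyticOrderAt_eq_natCast, smul_eq_mul]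
  rw [zeroOrder, hset, analyticOrderNatAt]
  cases analyticOrderAt f z₀ with
  | top => simp
  | coe m => simp

theorem AnalyticOnNhd.dslope {f : ℂ → ℂ} {s : Set ℂ} (hf : AnalyticOnNhd ℂ f s) {a : ℂ}
    (ha : a ∈ s) : AnalyticOnNhd ℂ (_root_.dslope f a) s := by
  have hV : IsOpen {z | AnalyticAt ℂ f z} := isOpen_analyticAt ℂ f
  have hdiff : DifferentiableOn ℂ (_root_.dslope f a) {z | AnalyticAt ℂ f z} :=
    (Complex.differentiableOn_dslope (hV.mem_nhds (hf a ha))).2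
      fun z hz => hz.differentiableAt.differentiableWithinAt
  exact (hdiff.analyticOnNhd hV).mono hf

theorem AnalyticOnNhd.finite_zeros_of_isCompact {f : ℂ → ℂ} {U K : Set ℂ}
    (hf : AnalyticOnNhd ℂ f U) (hU : IsPreconnected U) (hne : ∃ z ∈ U, f z ≠ 0)
    (hK : IsCompact K) (hKU : K ⊆ U) : {z ∈ K | f z = 0}.Finite := by
  by_contra hinf
  obtain ⟨a, haK, ha⟩ := Set.Infinite.exists_accPt_of_subset_isCompact hinf hK (sep_subset _ _)
  have hfreq : ∃ᶠ z in 𝓝[≠] a, f z = 0 :=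
    (accPt_iff_frequently_nhdsNE.mp ha).mono fun _ hz => hz.2
  obtain ⟨z, hz, hfz⟩ := hne
  exact hfz (hf.eqOn_zero_of_preconnected_of_frequently_eq_zero hU (hKU haK) hfreq hz)

theorem AnalyticOnNhd.finite_zeros_closedBall {f : ℂ → ℂ} {c : ℂ} {R : ℝ} (hR : 0 ≤ R)
    (hf : AnalyticOnNhd ℂ f (closedBall c R)) (hs : ∀ z ∈ sphere c R, f z ≠ 0) :
    {z ∈ closedBall c R | f z = 0}.Finite := by
  obtain ⟨y, hy⟩ := (NormedSpace.sphere_nonempty (x := c)).2 hR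
  exact hf.finite_zeros_of_isCompact (convex_closedBall c R).isPreconnected
    ⟨y, sphere_subset_closedBall hy, hs y hy⟩ (isCompact_closedBall c R) subset_rfl

theorem analyticOrderAt_ne_top_of_ne_zero_on_sphere {f : ℂ → ℂ} {c : ℂ} {R : ℝ} (hR : 0 ≤ R)
    (hf : AnalyticOnNhd ℂ f (closedBall c R)) (hs : ∀ z ∈ sphere c R, f z ≠ 0) {z : ℂ}
    (hz : z ∈ closedBall c R) : analyticOrderAt f z ≠ ⊤ := by
  obtain ⟨y, hy⟩ := (NormedSpace.sphere_nonempty (x := c)).2 hR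
  have hyR := sphere_subset_closedBall hy
  refine hf.analyticOrderAt_ne_top_of_isPreconnected (convex_closedBall c R).isPreconnected
    hyR hz ?_
  simp [(hf y hyR).analyticOrderAt_eq_zero.2 (hs y hy)]

theorem circleIntegrable_logDeriv {f : ℂ → ℂ} {c : ℂ} {R : ℝ} (hR : 0 ≤ R)
    (hf : ∀ z ∈ sphere c R, AnalyticAt ℂ f z) (hs : ∀ z ∈ sphere c R, f z ≠ 0) :
    CircleIntegrable (logDeriv f) c R :=
  ContinuousOn.circleIntegrable hR fun z hz =>
    ((hf z hz).deriv.continuousAt.div (hf z hz).continuousAt (hs z hz)).continuousWithinAt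

theorem circleIntegral_logDeriv_eq_zero {f : ℂ → ℂ} {c : ℂ} {R : ℝ} (hR : 0 ≤ R)
    (hf : AnalyticOnNhd ℂ f (closedBall c R)) (hne : ∀ z ∈ closedBall c R, f z ≠ 0) :
    ∮ z in C(c, R), logDeriv f z = 0 := by
  have hlog : ∀ z ∈ closedBall c R, AnalyticAt ℂ (logDeriv f) z := fun z hz =>
    (hf z hz).deriv.div (hf z hz) (hne z hz)
  exact circleIntegral_eq_zero_of_differentiable_on_off_countable hR countable_empty
    (fun z hz => (hlog z hz).continuousAt.continuousWithinAt)
    fun z hz => (hlog z (ball_subset_closedBall hz.1)).differentiableAt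

theorem analyticOrderNatAt_id_sub_const (a z : ℂ) :
    analyticOrderNatAt (· - a) z = if z = a then 1 else 0 := by
  split_ifs with h <;> simp [analyticOrderNatAt, h]

theorem circleIntegral_logDeriv_eq_sum_analyticOrderNatAt {f : ℂ → ℂ} {c : ℂ} {R : ℝ}
    (hR : 0 ≤ R) (hf : AnalyticOnNhd ℂ f (closedBall c R)) (hs : ∀ z ∈ sphere c R, f z ≠ 0)
    {Z : Finset ℂ} (hZ : ↑Z ⊆ closedBall c R)
    (hzeros : ∀ z ∈ closedBall c R, f z = 0 → z ∈ Z) :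
    ∮ z in C(c, R), logDeriv f z = 2 * π * I * ∑ z ∈ Z, analyticOrderNatAt f z := by
  induction hn : ∑ z ∈ Z, analyticOrderNatAt f z generalizing f with
  | zero =>
    refine (circleIntegral_logDeriv_eq_zero hR hf fun z hz hfz => ?_).trans (by simp)
    have hord := Finset.sum_eq_zero_iff.1 hn z (hzeros z hz hfz)
    rw [← Nat.cast_inj (R := ℕ∞), Nat.cast_analyticOrderNatAt
      (analyticOrderAt_ne_top_of_ne_zero_on_sphere hR hf hs hz)] at hord
    exact (hf z hz).analyticOrderAt_eq_zero.1 hord hfz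
  | succ n ih =>
    obtain ⟨z₀, hz₀Z, hz₀⟩ :=
      Finset.exists_ne_zero_of_sum_ne_zero (by rw [hn]; exact n.succ_ne_zero)
    have hfz₀ : f z₀ = 0 := apply_eq_zero_of_analyticOrderNatAt_ne_zero hz₀
    have hz₀s : z₀ ∉ sphere c R := fun h => hs z₀ h hfz₀
    have hz₀ball : z₀ ∈ ball c R := by rw [← closedBall_sdiff_sphere]; exact ⟨hZ hz₀Z, hz₀s⟩
    set h := dslope f z₀
    have hfh : f = (· - z₀) * h := funext fun z => (sub_smul_dslope_of_zero hfz₀ z).symm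
    have hh : AnalyticOnNhd ℂ h (closedBall c R) := hf.dslope (hZ hz₀Z)
    have hhs : ∀ z ∈ sphere c R, h z ≠ 0 := fun z hz hhz =>
      hs z hz (by rw [hfh, Pi.mul_apply, hhz, mul_zero])
    have hord : ∀ z ∈ Z, analyticOrderNatAt f z =
        analyticOrderNatAt (· - z₀) z + analyticOrderNatAt h z := by
      intro z hz
      have hf' := analyticOrderAt_ne_top_of_ne_zero_on_sphere hR hf hs (hZ hz)
      rw [hfh] at hf' ⊢
      exact analyticOrderNatAt_mul (by fun_prop) (hh z (hZ hz))
        (fun h' => hf' (analyticOrderAt_mul_eq_top_of_left h'))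
        (fun h' => hf' (analyticOrderAt_mul_eq_top_of_right h'))
    have hsum : ∑ z ∈ Z, analyticOrderNatAt h z = n := by
      rw [Finset.sum_congr rfl hord, Finset.sum_add_distrib] at hn
      simp only [analyticOrderNatAt_id_sub_const, Finset.sum_ite_eq', if_pos hz₀Z] at hn
      omega
    have hzeros' : ∀ z ∈ closedBall c R, h z = 0 → z ∈ Z := fun z hz hhz =>
      hzeros z hz (by rw [hfh, Pi.mul_apply, hhz, mul_zero])
    have hlog : ∀ z ∈ sphere c R, logDeriv f z = (z - z₀)⁻¹ + logDeriv h z := by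
      intro z hz
      have hzz₀ : z - z₀ ≠ 0 := sub_ne_zero.2 fun h => hz₀s (h ▸ hz)
      rw [hfh, show (· - z₀) * h = fun z => (z - z₀) * h z from rfl,
        logDeriv_mul z hzz₀ (hhs z hz) (by fun_prop)
          (hh z (sphere_subset_closedBall hz)).differentiableAt]
      simp [logDeriv_apply]
    have hsub : CircleIntegrable (fun z => (z - z₀)⁻¹) c R :=
      circleIntegrable_sub_inv_iff.2 (Or.inr (by rwa [abs_of_nonneg hR]))
    rw [circleIntegral.integral_congr hR hlog, circleIntegral.integral_add hsub
      (circleIntegrable_logDeriv hR (fun z hz => hh z (sphere_subset_closedBall hz)) hhs),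
      circleIntegral.integral_sub_inv_of_mem_ball hz₀ball, ih hh hhs hzeros' hsum]
    push_cast
    ring

theorem ne_zero_of_norm_sub_lt {a b : ℂ} (h : ‖b - a‖ < ‖a‖) : a ≠ 0 ∧ b ≠ 0 := by
  constructor <;> rintro rfl <;> simp at h
  exact (norm_nonneg b).not_gt h

theorem circleIntegral_logDeriv_eq_of_norm_sub_lt {f g : ℂ → ℂ} {c : ℂ} {R : ℝ} (hR : 0 ≤ R)
    (hf : ∀ z ∈ sphere c R, AnalyticAt ℂ f z) (hg : ∀ z ∈ sphere c R, AnalyticAt ℂ g z)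
    (hlt : ∀ z ∈ sphere c R, ‖g z - f z‖ < ‖f z‖) :
    ∮ z in C(c, R), logDeriv g z = ∮ z in C(c, R), logDeriv f z := by
  have hf0 : ∀ z ∈ sphere c R, f z ≠ 0 := fun z hz => (ne_zero_of_norm_sub_lt (hlt z hz)).1
  have hg0 : ∀ z ∈ sphere c R, g z ≠ 0 := fun z hz => (ne_zero_of_norm_sub_lt (hlt z hz)).2
  -- `g / f` stays in the disc of radius one around `1`, where `log` is holomorphic.
  have hslit : ∀ z ∈ sphere c R, g z / f z ∈ slitPlane := by
    intro z hz
    have hq : g z / f z = 1 + (g z - f z) / f z := by field_simp [hf0 z hz]; ring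
    rw [hq]
    refine mem_slitPlane_of_norm_lt_one ?_
    rw [norm_div, div_lt_one (norm_pos_iff.2 (hf0 z hz))]
    exact hlt z hz
  have hprim : ∀ z ∈ sphere c R, HasDerivWithinAt (fun z => log ((g / f) z))
      (logDeriv g z - logDeriv f z) (sphere c R) z := by
    intro z hz
    have h := ((hg z hz).differentiableAt.hasDerivAt.div (hf z hz).differentiableAt.hasDerivAt
      (hf0 z hz)).clog (hslit z hz)
    refine (h.congr_deriv ?_).hasDerivWithinAt
    simp only [logDeriv_apply, Pi.div_apply]
    field_simp [hf0 z hz, hg0 z hz]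
  have h := circleIntegral.integral_eq_zero_of_hasDerivWithinAt hR hprim
  rwa [circleIntegral.integral_sub (circleIntegrable_logDeriv hR hg hg0)
    (circleIntegrable_logDeriv hR hf hf0), sub_eq_zero] at h

-- `∑ᶠ` is `0` when `f` has infinitely many zeros in `s`, so finiteness is always proved alongside.
noncomputable def zeroCount (f : ℂ → ℂ) (s : Set ℂ) : ℕ :=
  ∑ᶠ z ∈ s, analyticOrderNatAt f z

theorem zeroCount_eq_sum {f : ℂ → ℂ} {s : Set ℂ} {Z : Finset ℂ} (hZ : ↑Z ⊆ s)
    (hzeros : ∀ z ∈ s, f z = 0 → z ∈ Z) : zeroCount f s = ∑ z ∈ Z, analyticOrderNatAt f z :=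
  finsum_mem_eq_sum_of_subset _
    (fun z hz => hzeros z hz.1 (apply_eq_zero_of_analyticOrderNatAt_ne_zero hz.2)) hZ

theorem zeroCount_closedBall_eq_of_norm_sub_lt {f g : ℂ → ℂ} {c : ℂ} {R : ℝ} (hR : 0 ≤ R)
    (hf : AnalyticOnNhd ℂ f (closedBall c R)) (hg : AnalyticOnNhd ℂ g (closedBall c R))
    (hlt : ∀ z ∈ sphere c R, ‖g z - f z‖ < ‖f z‖) :
    zeroCount g (closedBall c R) = zeroCount f (closedBall c R) := by
  have hf0 : ∀ z ∈ sphere c R, f z ≠ 0 := fun z hz => (ne_zero_of_norm_sub_lt (hlt z hz)).1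
  have hg0 : ∀ z ∈ sphere c R, g z ≠ 0 := fun z hz => (ne_zero_of_norm_sub_lt (hlt z hz)).2
  have hfin : {z ∈ closedBall c R | f z * g z = 0}.Finite :=
    (hf.mul hg).finite_zeros_closedBall hR fun z hz => mul_ne_zero (hf0 z hz) (hg0 z hz)
  have hZ : ↑hfin.toFinset ⊆ closedBall c R := fun z hz => (hfin.mem_toFinset.1 hz).1
  have hfZ : ∀ z ∈ closedBall c R, f z = 0 → z ∈ hfin.toFinset := fun z hz h0 =>
    hfin.mem_toFinset.2 ⟨hz, by simp [h0]⟩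
  have hgZ : ∀ z ∈ closedBall c R, g z = 0 → z ∈ hfin.toFinset := fun z hz h0 =>
    hfin.mem_toFinset.2 ⟨hz, by simp [h0]⟩
  have h := circleIntegral_logDeriv_eq_of_norm_sub_lt hR
    (fun z hz => hf z (sphere_subset_closedBall hz))
    (fun z hz => hg z (sphere_subset_closedBall hz)) hlt
  rw [circleIntegral_logDeriv_eq_sum_analyticOrderNatAt hR hg hg0 hZ hgZ,
    circleIntegral_logDeriv_eq_sum_analyticOrderNatAt hR hf hf0 hZ hfZ] at h
  rw [zeroCount_eq_sum hZ hgZ, zeroCount_eq_sum hZ hfZ]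
  exact_mod_cast mul_left_cancel₀ two_pi_I_ne_zero h

theorem zeroCount_eq_finsum_zeros (f : ℂ → ℂ) (s : Set ℂ) :
    zeroCount f s = ∑ᶠ z ∈ {z ∈ s | f z = 0}, analyticOrderNatAt f z :=
  finsum_mem_inter_support_eq' _ _ _ fun _ hz =>
    ⟨fun hzs => ⟨hzs, apply_eq_zero_of_analyticOrderNatAt_ne_zero hz⟩, And.left⟩

theorem zeroCount_eq_sum_zeroCount {f : ℂ → ℂ} {K : Set ℂ} {ι : Type*} {S : Finset ι}
    {T : ι → Set ℂ} (hTK : ∀ i ∈ S, T i ⊆ K) (hdisj : (S : Set ι).PairwiseDisjoint T)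
    (hzeros : ∀ z ∈ K, f z = 0 → ∃ i ∈ S, z ∈ T i)
    (hfin : ∀ i ∈ S, {z ∈ T i | f z = 0}.Finite) :
    zeroCount f K = ∑ i ∈ S, zeroCount f (T i) := by
  have hK : {z ∈ K | f z = 0} = ⋃ i ∈ (S : Set ι), {z ∈ T i | f z = 0} := by
    ext z
    simp only [mem_ofPred_eq, mem_iUnion, Finset.mem_coe, exists_prop]
    constructor
    · rintro ⟨hz, h0⟩
      obtain ⟨i, hi, hzi⟩ := hzeros z hz h0
      exact ⟨i, hi, hzi, h0⟩
    · rintro ⟨i, hi, hzi, h0⟩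
      exact ⟨hTK i hi hzi, h0⟩
  rw [zeroCount_eq_finsum_zeros, hK, finsum_mem_biUnion (hdisj.mono fun i => sep_subset _ _)
    S.finite_toSet hfin, finsum_mem_coe_finset]
  exact Finset.sum_congr rfl fun i _ => (zeroCount_eq_finsum_zeros f (T i)).symm

theorem hasValence_zeroCount {g : ℂ → ℂ} {K : Set ℂ} {w : ℂ} (hg : AnalyticOnNhd ℂ g K)
    (hfin : {z ∈ K | g z - w = 0}.Finite) :
    HasValence g K w (zeroCount (fun z => g z - w) K) := by
  have hfin' : {z ∈ K | g z = w}.Finite := by simpa only [sub_eq_zero] using hfin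
  refine ⟨hfin', ?_⟩
  rw [zeroCount_eq_sum (fun z hz => (hfin'.mem_toFinset.1 hz).1)
    fun z hz h0 => hfin'.mem_toFinset.2 ⟨hz, sub_eq_zero.1 h0⟩]
  exact Finset.sum_congr rfl fun z hz =>
    zeroOrder_eq_analyticOrderNatAt ((hg z (hfin'.mem_toFinset.1 hz).1).sub analyticAt_const)

theorem zeroCount_eq_of_norm_sub_lt {f g : ℂ → ℂ} {K : Set ℂ} (hf : AnalyticOnNhd ℂ f K)
    (hg : AnalyticOnNhd ℂ g K) {S : Finset ℂ} {r : ℝ} (hr : 0 < r)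
    (hSK : ∀ c ∈ S, closedBall c r ⊆ K) (hdisj : (S : Set ℂ).PairwiseDisjoint (closedBall · r))
    (hzeros : ∀ z ∈ K, f z = 0 → z ∈ S)
    (hlt : ∀ z ∈ K \ ⋃ c ∈ S, ball c r, ‖g z - f z‖ < ‖f z‖) :
    {z ∈ K | g z = 0}.Finite ∧ zeroCount g K = zeroCount f K := by
  have hsphere : ∀ c ∈ S, ∀ z ∈ sphere c r, ‖g z - f z‖ < ‖f z‖ := fun c hc z hz =>
    hlt z (sphere_subset_diff_biUnion_ball (Finset.mem_coe.2 hc) (hSK c hc) hdisj hz)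
  have hffin : ∀ c ∈ S, {z ∈ closedBall c r | f z = 0}.Finite := fun c hc =>
    (hf.mono (hSK c hc)).finite_zeros_closedBall hr.le fun z hz =>
      (ne_zero_of_norm_sub_lt (hsphere c hc z hz)).1
  have hgfin : ∀ c ∈ S, {z ∈ closedBall c r | g z = 0}.Finite := fun c hc =>
    (hg.mono (hSK c hc)).finite_zeros_closedBall hr.le fun z hz =>
      (ne_zero_of_norm_sub_lt (hsphere c hc z hz)).2
  have hgzeros : ∀ z ∈ K, g z = 0 → ∃ c ∈ S, z ∈ closedBall c r := by
    intro z hz h0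
    by_contra hout
    refine (ne_zero_of_norm_sub_lt (hlt z ⟨hz, ?_⟩)).2 h0
    simp only [mem_iUnion, not_exists]
    exact fun c hc hzc => hout ⟨c, hc, ball_subset_closedBall hzc⟩
  refine ⟨(S.finite_toSet.biUnion hgfin).subset fun z ⟨hz, h0⟩ => ?_, ?_⟩
  · obtain ⟨c, hc, hzc⟩ := hgzeros z hz h0
    exact mem_biUnion hc ⟨hzc, h0⟩
  rw [zeroCount_eq_sum_zeroCount hSK hdisj hgzeros hgfin,
    zeroCount_eq_sum_zeroCount hSK hdisj
      (fun z hz h0 => ⟨z, hzeros z hz h0, mem_closedBall_self hr.le⟩) hffin]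
  exact Finset.sum_congr rfl fun c hc => zeroCount_closedBall_eq_of_norm_sub_lt hr.le
    (hf.mono (hSK c hc)) (hg.mono (hSK c hc)) (hsphere c hc)

theorem stmt_8 (F : ℕ → ℂ → ℂ) (f : ℂ → ℂ)
    (hF : ∀ n, DifferentiableOn ℂ (F n) (ball (0:ℂ) 1))
    (hf : DifferentiableOn ℂ f (ball (0:ℂ) 1))
    (hconv : TendstoLocallyUniformlyOn F f atTop (ball (0:ℂ) 1))
    (hnc : ¬ ∃ c : ℂ, ∀ z ∈ ball (0:ℂ) 1, f z = c) :
    ∀ (w : ℂ) (K : Set ℂ), IsCompact K → K ⊆ ball (0:ℂ) 1 →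
      (∀ z ∈ frontier K, f z ≠ w) →
      ∃ d : ℕ, HasValence f K w d ∧ ∀ᶠ n in atTop, HasValence (F n) K w d := by
  intro w K hK hKU hfr
  have hfa := hf.analyticOnNhd isOpen_ball
  have hFa := fun n => (hF n).analyticOnNhd isOpen_ball
  have hφ : AnalyticOnNhd ℂ (fun z => f z - w) (ball 0 1) := hfa.sub analyticOnNhd_const
  obtain ⟨z₁, hz₁, hfz₁⟩ : ∃ z ∈ ball (0:ℂ) 1, f z ≠ w := by
    push Not at hnc
    exact hnc w
  have hSfin : {z ∈ K | f z - w = 0}.Finite := hφ.finite_zeros_of_isCompact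
    (convex_ball 0 1).isPreconnected ⟨z₁, hz₁, sub_ne_zero.2 hfz₁⟩ hK hKU
  have hSint : ∀ z ∈ hSfin.toFinset, z ∈ interior K := fun z hz => by
    obtain ⟨hzK, h0⟩ := hSfin.mem_toFinset.1 hz
    exact self_sdiff_frontier K ▸ ⟨hzK, fun hz' => hfr z hz' (sub_eq_zero.1 h0)⟩
  obtain ⟨r, hr, hrK, hdisj⟩ := exists_pos_closedBall_subset_pairwiseDisjoint _ hSint
  set K' := K \ ⋃ c ∈ hSfin.toFinset, ball c r
  have hK' : IsCompact K' := hK.diff (isOpen_biUnion fun _ _ => isOpen_ball)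
  have hK'U : K' ⊆ ball 0 1 := sdiff_subset.trans hKU
  have hK'0 : ∀ z ∈ K', 0 < ‖f z - w‖ := fun z hz => norm_pos_iff.2 fun h0 =>
    hz.2 (mem_biUnion (hSfin.mem_toFinset.2 ⟨hz.1, h0⟩) (mem_ball_self hr))
  have hclose := ((tendstoLocallyUniformlyOn_iff_tendstoUniformlyOn_of_compact hK').1
    (hconv.mono hK'U)).eventually_forall_dist_lt hK' (hφ.continuousOn.norm.mono hK'U) hK'0
  refine ⟨_, hasValence_zeroCount (hfa.mono hKU) hSfin, ?_⟩
  filter_upwards [hclose] with n hn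
  obtain ⟨hfin, hcount⟩ := zeroCount_eq_of_norm_sub_lt (g := fun z => F n z - w) (hφ.mono hKU)
    (((hFa n).sub analyticOnNhd_const).mono hKU) hr hrK hdisj
    (fun z hz h0 => hSfin.mem_toFinset.2 ⟨hz, h0⟩)
    (fun z hz => by simpa [dist_eq_norm', sub_sub_sub_cancel_right] using hn z hz)
  exact hcount ▸ hasValence_zeroCount ((hFa n).mono hKU) hfin
end

section
/- Let Ω = 𝔻 \ [0,1) and g : 𝔻 → Ω a biholomorphism, k ≥ 2 an integer, f = g^k. Then every point of 𝔻 has at most k preimages under f, and the complement 𝔻 \ f(𝔻) has Lebesgue measure zero, yet f is not surjective onto 𝔻. -/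
/-!
The map `g` carries the disc onto the slit disc `Ω`, so `f '' 𝔻 = (· ^ k) '' Ω`. Every nonzero
`w ∈ 𝔻` has `k ≥ 2` distinct `k`-th roots, all in `𝔻`, and at most one of them is a nonnegative
real; so some root lies in `Ω`, and `f '' 𝔻 = 𝔻 \ {0}`. The fibres of `f` inject into the sets of
`k`-th roots through `g`.
-/

open Complex Metric MeasureTheory Set Filter

theorem Polynomial.ncard_setOf_pow_eq_le {R : Type*} [CommRing R] [IsDomain R] {k : ℕ}
    (hk : 0 < k) (w : R) : {u : R | u ^ k = w}.ncard ≤ k := by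
  classical
  rw [← nthRootsFinset_toSet hk, ncard_coe_finset, nthRootsFinset_def]
  exact (Multiset.toFinset_card_le _).trans (card_nthRoots k w)

theorem Set.InjOn.finite_and_ncard_le_of_pow_eq {α R : Type*} [CommRing R] [IsDomain R]
    {g : α → R} {s : Set α} (hg : InjOn g s) {k : ℕ} (hk : 0 < k) (w : R) :
    {z ∈ s | g z ^ k = w}.Finite ∧ {z ∈ s | g z ^ k = w}.ncard ≤ k := by
  have hroots : {u : R | u ^ k = w}.Finite := by
    rw [← Polynomial.nthRootsFinset_toSet hk]
    exact Finset.finite_toSet _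
  have hmaps : MapsTo g {z ∈ s | g z ^ k = w} {u | u ^ k = w} := fun _ hz => hz.2
  have hinj : InjOn g {z ∈ s | g z ^ k = w} := hg.mono fun _ hz => hz.1
  exact ⟨(hroots.subset hmaps.image_subset).of_finite_image hinj,
    (ncard_le_ncard_of_injOn g hmaps hinj hroots).trans (Polynomial.ncard_setOf_pow_eq_le hk w)⟩

theorem Complex.norm_lt_one_of_pow_eq {k : ℕ} (hk : k ≠ 0) {u w : ℂ} (hu : u ^ k = w)
    (hw : ‖w‖ < 1) : ‖u‖ < 1 := by
  rw [← hu, norm_pow] at hw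
  exact (pow_lt_one_iff_of_nonneg (norm_nonneg u) hk).mp hw

theorem Complex.exists_pow_eq_notMem_ofReal_Ici {k : ℕ} (hk : 2 ≤ k) {w : ℂ} (hw : w ≠ 0) :
    ∃ u : ℂ, u ^ k = w ∧ u ∉ ofReal '' Ici 0 := by
  obtain ⟨r, hr⟩ := IsAlgClosed.exists_pow_nat_eq w (by omega : 0 < k)
  by_cases hr_real : r ∈ ofReal '' Ici 0
  swap
  · exact ⟨r, hr, hr_real⟩
  obtain ⟨x, hx, rfl⟩ := hr_real
  -- otherwise rotate `r` by a primitive `k`-th root of unity `ζ ≠ 1`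
  have hζ := isPrimitiveRoot_exp k (by omega)
  set ζ := exp (2 * Real.pi * I / k)
  refine ⟨x * ζ, by rw [mul_pow, hζ.pow_eq_one, mul_one, hr], ?_⟩
  rintro ⟨y, hy, hyx⟩
  have hxy : x = y := by
    refine (pow_left_inj₀ hx hy (by omega : k ≠ 0)).mp (ofReal_injective ?_)
    push_cast
    rw [hyx, mul_pow, hζ.pow_eq_one, mul_one]
  have hx0 : (x : ℂ) ≠ 0 := by
    rintro hx0
    exact hw (by rw [← hr, hx0, zero_pow (by omega)])
  exact hζ.ne_one (by omega) (mul_left_cancel₀ hx0 (by rw [mul_one, ← hyx, hxy]))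

theorem Complex.image_pow_ball_diff_slit {k : ℕ} (hk : 2 ≤ k) :
    (· ^ k) '' (ball (0 : ℂ) 1 \ ofReal '' Ico 0 1) = ball 0 1 \ {0} := by
  ext w
  simp only [mem_ball_zero_iff, mem_image, Set.mem_sdiff, mem_singleton_iff]
  constructor
  · rintro ⟨u, ⟨hu, hu_slit⟩, rfl⟩
    have hu0 : u ≠ 0 := fun h => hu_slit ⟨0, ⟨le_rfl, one_pos⟩, by rw [h, ofReal_zero]⟩
    exact ⟨by rw [norm_pow]; exact pow_lt_one₀ (norm_nonneg u) hu (by omega),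
      pow_ne_zero k hu0⟩
  · rintro ⟨hw, hw0⟩
    obtain ⟨u, hu, hu_slit⟩ := exists_pow_eq_notMem_ofReal_Ici hk hw0
    exact ⟨u, ⟨norm_lt_one_of_pow_eq (by omega) hu hw,
      fun h => hu_slit (image_mono Ico_subset_Ici_self h)⟩, hu⟩

theorem stmt_11_general (g : ℂ → ℂ)
    (hbij : Set.BijOn g (ball (0:ℂ) 1)
      (ball (0:ℂ) 1 \ (Complex.ofReal '' Set.Ico (0:ℝ) 1)))
    (k : ℕ) (hk : 2 ≤ k) (f : ℂ → ℂ) (hf : f = fun z => g z ^ k) :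
    (∀ w ∈ ball (0:ℂ) 1, {z ∈ ball (0:ℂ) 1 | f z = w}.Finite ∧
      {z ∈ ball (0:ℂ) 1 | f z = w}.ncard ≤ k) ∧
    volume (ball (0:ℂ) 1 \ f '' ball (0:ℂ) 1) = 0 ∧
    f '' ball (0:ℂ) 1 ≠ ball (0:ℂ) 1 := by
  subst hf
  have himage : (fun z => g z ^ k) '' ball (0:ℂ) 1 = ball 0 1 \ {0} := by
    rw [← image_image (· ^ k) g, hbij.image_eq, image_pow_ball_diff_slit hk]
  refine ⟨fun w _ => hbij.injOn.finite_and_ncard_le_of_pow_eq (by omega) w, ?_, ?_⟩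
  · rw [himage, Set.sdiff_sdiff_right_self]
    exact measure_mono_null inter_subset_right (measure_singleton 0)
  · rw [himage]
    intro h
    exact (h.symm ▸ mem_ball_self one_pos : (0:ℂ) ∈ ball (0:ℂ) 1 \ {0}).2 rfl

theorem stmt_11 (g : ℂ → ℂ)
    (hg : DifferentiableOn ℂ g (ball (0:ℂ) 1))
    (hbij : Set.BijOn g (ball (0:ℂ) 1)
      (ball (0:ℂ) 1 \ (Complex.ofReal '' Set.Ico (0:ℝ) 1)))
    (k : ℕ) (hk : 2 ≤ k) (f : ℂ → ℂ) (hf : f = fun z => g z ^ k) :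
    (∀ w ∈ ball (0:ℂ) 1, {z ∈ ball (0:ℂ) 1 | f z = w}.Finite ∧
      {z ∈ ball (0:ℂ) 1 | f z = w}.ncard ≤ k) ∧
    volume (ball (0:ℂ) 1 \ f '' ball (0:ℂ) 1) = 0 ∧
    f '' ball (0:ℂ) 1 ≠ ball (0:ℂ) 1 :=
  stmt_11_general g hbij k hk f hf
end
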